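/- Let d ≥ 1, t > 1, x₁ ∈ ℝ^d and ν₀ ∈ P₂(ℝ^d), and take ν₁ = δ_{x₁} (the Dirac mass at x₁). Then the unique minimizer of F_t(ν₀,ν₁;·) over P₂(ℝ^d) is the Dirac mass δ_{x_t}, where x_t = bary(ν₀) + t·(x₁ − bary(ν₀)) and bary(ν₀) = ∫ x dν₀(x). -/

import Mathlib

open MeasureTheory
open scoped ENNReal

noncomputable section

abbrev EucSp (d : ℕ) := EuclideanSpace ℝ (Fin d)

/-- `γ` is a coupling of `μ` and `ν`. -/
def IsCoupling {d : ℕ} (γ : Measure (EucSp d × EucSp d)) (μ ν : Measure (EucSp d)) : Prop :=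
  γ.map Prod.fst = μ ∧ γ.map Prod.snd = ν

/-- Probability measures on `ℝ^d` with finite second moment. -/
def P2 (d : ℕ) : Set (Measure (EucSp d)) :=
  {μ | IsProbabilityMeasure μ ∧ Integrable (fun x => ‖x‖ ^ 2) μ}

/-- Squared Wasserstein distance. -/
noncomputable def W2sq {d : ℕ} (μ ν : Measure (EucSp d)) : ℝ :=
  sInf {r | ∃ γ : Measure (EucSp d × EucSp d), IsProbabilityMeasure γ ∧ IsCoupling γ μ ν ∧
      r = ∫ p, ‖p.1 - p.2‖ ^ 2 ∂γ}

/-- Wasserstein distance. -/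
noncomputable def W2 {d : ℕ} (μ ν : Measure (EucSp d)) : ℝ := Real.sqrt (W2sq μ ν)

/-- Metric extrapolation functional. -/
noncomputable def Ft {d : ℕ} (t : ℝ) (ν₀ ν₁ μ : Measure (EucSp d)) : ℝ :=
  W2sq μ ν₁ / (2 * (t - 1)) - W2sq μ ν₀ / (2 * t)

/-- `μ` minimizes the metric extrapolation functional over `P2 d`. -/
def IsExtrapolation {d : ℕ} (t : ℝ) (ν₀ ν₁ μ : Measure (EucSp d)) : Prop :=
  μ ∈ P2 d ∧ ∀ ρ ∈ P2 d, Ft t ν₀ ν₁ μ ≤ Ft t ν₀ ν₁ ρ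

end

/-! With `b = bary ν₀`, the cost to a Dirac mass is exact, `W₂²(ρ, δ_{x₁}) = ∫ ‖x - x₁‖² dρ`,
while the independent coupling gives `W₂²(ρ, ν₀) ≤ ∫ ‖x - b‖² dρ + ∫ ‖y - b‖² dν₀`, with equality
when `ρ` is a Dirac mass. So `F_t(ρ)` is bounded below by the `ρ`-average of the quadratic
`q(x) = ‖x - x₁‖² / (2(t-1)) - ‖x - b‖² / (2t)` (up to a constant), and `F_t(δ_x)` is `q(x)` up to
the same constant. Completing the square, `q(x) = q(x_t) + ‖x - x_t‖² / (2t(t-1))`, whence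
`F_t(ρ) ≥ F_t(δ_{x_t}) + ∫ ‖x - x_t‖² dρ / (2t(t-1))`: this gives minimality of `δ_{x_t}`, and any
other minimizer has `∫ ‖x - x_t‖² dρ = 0`. -/

open scoped RealInnerProductSpace

section NormedGroup

variable {E : Type*} [NormedAddCommGroup E] [MeasurableSpace E] {μ : Measure E}
  [IsProbabilityMeasure μ]

lemma integrable_norm_sub_sq (hμ : MemLp id 2 μ) (c : E) :
    Integrable (fun x => ‖x - c‖ ^ 2) μ :=
  (hμ.sub (memLp_const c)).integrable_norm_pow two_ne_zero

lemma integrable_norm_fst_sub_snd_sq {ν : Measure E} [IsProbabilityMeasure ν]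
    (hμ : MemLp id 2 μ) (hν : MemLp id 2 ν) :
    Integrable (fun p : E × E => ‖p.1 - p.2‖ ^ 2) (μ.prod ν) :=
  ((hμ.comp_measurePreserving measurePreserving_fst).sub
    (hν.comp_measurePreserving measurePreserving_snd)).integrable_norm_pow two_ne_zero

lemma eq_dirac_of_integral_norm_sub_sq_eq_zero {c : E}
    (hint : Integrable (fun x => ‖x - c‖ ^ 2) μ) (h : ∫ x, ‖x - c‖ ^ 2 ∂μ = 0) :
    μ = Measure.dirac c := by
  have hae : id =ᵐ[μ] fun _ => c := by
    filter_upwards [(integral_eq_zero_iff_of_nonneg (fun x => by positivity) hint).1 h] with x hx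
    simpa [sub_eq_zero] using hx
  rw [← Measure.map_id (μ := μ), Measure.map_congr hae, Measure.map_const, measure_univ, one_smul]

end NormedGroup

section InnerProductSpace

variable {E : Type*} [NormedAddCommGroup E] [InnerProductSpace ℝ E]

lemma norm_sub_sq_extrapolate (x a b : E) (t : ℝ) :
    t * ‖x - a‖ ^ 2 - (t - 1) * ‖x - b‖ ^ 2 =
      t * ‖b + t • (a - b) - a‖ ^ 2 - (t - 1) * ‖b + t • (a - b) - b‖ ^ 2 +
        ‖x - (b + t • (a - b))‖ ^ 2 := by
  rw [show x - a = (x - b) - (a - b) by abel,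
    show b + t • (a - b) - a = (t - 1) • (a - b) by module,
    show b + t • (a - b) - b = t • (a - b) by module,
    show x - (b + t • (a - b)) = (x - b) - t • (a - b) by abel]
  simp only [norm_sub_sq_real, norm_smul, inner_smul_right, mul_pow, Real.norm_eq_abs, sq_abs]
  ring

variable [MeasurableSpace E] {μ : Measure E} [IsProbabilityMeasure μ]

lemma integral_norm_sub_sq_extrapolate (hμ : MemLp id 2 μ) (a b : E) (t : ℝ) :
    t * ∫ x, ‖x - a‖ ^ 2 ∂μ - (t - 1) * ∫ x, ‖x - b‖ ^ 2 ∂μ =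
      t * ‖b + t • (a - b) - a‖ ^ 2 - (t - 1) * ‖b + t • (a - b) - b‖ ^ 2 +
        ∫ x, ‖x - (b + t • (a - b))‖ ^ 2 ∂μ := by
  rw [← integral_const_mul, ← integral_const_mul,
    ← integral_sub ((integrable_norm_sub_sq hμ a).const_mul t)
      ((integrable_norm_sub_sq hμ b).const_mul (t - 1)),
    integral_congr_ae (.of_forall fun x => norm_sub_sq_extrapolate x a b t),
    integral_add (integrable_const _) (integrable_norm_sub_sq hμ _)]
  simp

variable [CompleteSpace E]

lemma integral_norm_sub_sq (hμ : MemLp id 2 μ) (c : E) :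
    ∫ x, ‖x - c‖ ^ 2 ∂μ = ∫ x, ‖x - ∫ y, y ∂μ‖ ^ 2 ∂μ + ‖(∫ y, y ∂μ) - c‖ ^ 2 := by
  set m := ∫ y, y ∂μ
  have hid : Integrable (fun x => x) μ := hμ.integrable one_le_two
  have hcentered : Integrable (fun x => x - m) μ := hid.sub (integrable_const m)
  have hcross : Integrable (fun x => ‖x - m‖ ^ 2 + 2 * ⟪m - c, x - m⟫) μ :=
    (integrable_norm_sub_sq hμ m).add ((hcentered.const_inner (m - c)).const_mul 2)
  have hmean : ∫ x, (x - m) ∂μ = 0 := by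
    rw [integral_sub hid (integrable_const m)]
    simp [m]
  calc ∫ x, ‖x - c‖ ^ 2 ∂μ
      = ∫ x, (‖x - m‖ ^ 2 + 2 * ⟪m - c, x - m⟫) + ‖m - c‖ ^ 2 ∂μ := by
        refine integral_congr_ae (.of_forall fun x => ?_)
        dsimp only
        rw [show x - c = (x - m) + (m - c) by abel, norm_add_sq_real, real_inner_comm]
    _ = ∫ x, ‖x - m‖ ^ 2 ∂μ + ‖m - c‖ ^ 2 := by
        rw [integral_add hcross (integrable_const _),
          integral_add (integrable_norm_sub_sq hμ m) ((hcentered.const_inner (m - c)).const_mul 2),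
          integral_const_mul, integral_inner hcentered, hmean]
        simp

end InnerProductSpace

section Wasserstein

variable {d : ℕ}

lemma memLp_two_id_of_mem_P2 {μ : Measure (EucSp d)} (hμ : μ ∈ P2 d) : MemLp id 2 μ :=
  (memLp_two_iff_integrable_sq_norm aestronglyMeasurable_id).2 hμ.2

lemma dirac_mem_P2 (a : EucSp d) : Measure.dirac a ∈ P2 d :=
  ⟨inferInstance, integrable_dirac (by simp)⟩

lemma IsCoupling.map_swap {γ : Measure (EucSp d × EucSp d)} {μ ν : Measure (EucSp d)}
    (h : IsCoupling γ μ ν) : IsCoupling (γ.map Prod.swap) ν μ := by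
  refine ⟨?_, ?_⟩
  · rw [Measure.map_map measurable_fst measurable_swap]; exact h.2
  · rw [Measure.map_map measurable_snd measurable_swap]; exact h.1

lemma isCoupling_prod (μ ν : Measure (EucSp d)) [IsProbabilityMeasure μ]
    [IsProbabilityMeasure ν] : IsCoupling (μ.prod ν) μ ν :=
  ⟨(measurePreserving_fst).map_eq, (measurePreserving_snd).map_eq⟩

lemma W2sq_comm (μ ν : Measure (EucSp d)) : W2sq μ ν = W2sq ν μ := by
  suffices h : ∀ μ ν : Measure (EucSp d),
      {r | ∃ γ : Measure (EucSp d × EucSp d), IsProbabilityMeasure γ ∧ IsCoupling γ μ ν ∧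
        r = ∫ p, ‖p.1 - p.2‖ ^ 2 ∂γ} ⊆
      {r | ∃ γ : Measure (EucSp d × EucSp d), IsProbabilityMeasure γ ∧ IsCoupling γ ν μ ∧
        r = ∫ p, ‖p.1 - p.2‖ ^ 2 ∂γ} from
    congrArg sInf ((h μ ν).antisymm (h ν μ))
  rintro μ ν r ⟨γ, hγ, hc, rfl⟩
  refine ⟨γ.map Prod.swap, Measure.isProbabilityMeasure_map measurable_swap.aemeasurable,
    hc.map_swap, ?_⟩
  rw [integral_map measurable_swap.aemeasurable (by fun_prop)]
  simp [norm_sub_rev]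

lemma W2sq_le_integral_prod (μ ν : Measure (EucSp d)) [IsProbabilityMeasure μ]
    [IsProbabilityMeasure ν] : W2sq μ ν ≤ ∫ p, ‖p.1 - p.2‖ ^ 2 ∂(μ.prod ν) := by
  refine csInf_le ⟨0, ?_⟩ ⟨μ.prod ν, inferInstance, isCoupling_prod μ ν, rfl⟩
  rintro r ⟨γ, -, -, rfl⟩
  exact integral_nonneg fun p => by positivity

lemma IsCoupling.integral_norm_sub_sq_of_dirac_right {γ : Measure (EucSp d × EucSp d)}
    {μ : Measure (EucSp d)} {c : EucSp d} (h : IsCoupling γ μ (Measure.dirac c)) :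
    ∫ p, ‖p.1 - p.2‖ ^ 2 ∂γ = ∫ x, ‖x - c‖ ^ 2 ∂μ := by
  have hsnd : ∀ᵐ p ∂γ, p.2 = c :=
    ae_of_ae_map measurable_snd.aemeasurable (h.2 ▸ ae_eq_dirac id)
  calc ∫ p, ‖p.1 - p.2‖ ^ 2 ∂γ = ∫ p, ‖p.1 - c‖ ^ 2 ∂γ :=
        integral_congr_ae (hsnd.mono fun p hp => by simp only [hp])
    _ = ∫ x, ‖x - c‖ ^ 2 ∂μ := by
        rw [← h.1, integral_map measurable_fst.aemeasurable (by fun_prop)]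

lemma W2sq_dirac_right (μ : Measure (EucSp d)) [IsProbabilityMeasure μ] (c : EucSp d) :
    W2sq μ (Measure.dirac c) = ∫ x, ‖x - c‖ ^ 2 ∂μ := by
  have hcosts : {r | ∃ γ : Measure (EucSp d × EucSp d), IsProbabilityMeasure γ ∧
      IsCoupling γ μ (Measure.dirac c) ∧ r = ∫ p, ‖p.1 - p.2‖ ^ 2 ∂γ} =
      {∫ x, ‖x - c‖ ^ 2 ∂μ} := by
    ext r
    constructor
    · rintro ⟨γ, -, hc, rfl⟩
      exact hc.integral_norm_sub_sq_of_dirac_right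
    · rintro rfl
      exact ⟨_, inferInstance, isCoupling_prod μ _,
        (isCoupling_prod μ _).integral_norm_sub_sq_of_dirac_right.symm⟩
  rw [W2sq, hcosts, csInf_singleton]

lemma W2sq_le_integral_norm_sub_sq_add {ρ ν : Measure (EucSp d)} [IsProbabilityMeasure ρ]
    [IsProbabilityMeasure ν] (hρ : MemLp id 2 ρ) (hν : MemLp id 2 ν) :
    W2sq ρ ν ≤ ∫ x, ‖x - ∫ y, y ∂ν‖ ^ 2 ∂ρ + ∫ y, ‖y - ∫ z, z ∂ν‖ ^ 2 ∂ν := by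
  set m := ∫ y, y ∂ν
  have hinner : ∀ x, ∫ y, ‖x - y‖ ^ 2 ∂ν = ∫ y, ‖y - m‖ ^ 2 ∂ν + ‖x - m‖ ^ 2 := fun x => by
    simp_rw [norm_sub_rev x, integral_norm_sub_sq hν x]
    rw [norm_sub_rev]
  calc W2sq ρ ν ≤ ∫ p, ‖p.1 - p.2‖ ^ 2 ∂(ρ.prod ν) := W2sq_le_integral_prod ρ ν
    _ = ∫ x, (∫ y, ‖y - m‖ ^ 2 ∂ν + ‖x - m‖ ^ 2) ∂ρ := by
        rw [integral_prod _ (integrable_norm_fst_sub_snd_sq hρ hν)]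
        simp_rw [hinner]
    _ = ∫ x, ‖x - m‖ ^ 2 ∂ρ + ∫ y, ‖y - m‖ ^ 2 ∂ν := by
        rw [integral_add (integrable_const _) (integrable_norm_sub_sq hρ m), integral_const]
        simp [add_comm]

end Wasserstein

lemma Ft_dirac_add_le {d : ℕ} {t : ℝ} (ht : 1 < t) (x₁ : EucSp d) {ν₀ ρ : Measure (EucSp d)}
    (h₀ : ν₀ ∈ P2 d) (hρ : ρ ∈ P2 d) :
    Ft t ν₀ (Measure.dirac x₁) (Measure.dirac ((∫ x, x ∂ν₀) + t • (x₁ - ∫ x, x ∂ν₀))) +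
        (∫ x, ‖x - ((∫ x, x ∂ν₀) + t • (x₁ - ∫ x, x ∂ν₀))‖ ^ 2 ∂ρ) / (2 * t * (t - 1)) ≤
      Ft t ν₀ (Measure.dirac x₁) ρ := by
  have := h₀.1
  have := hρ.1
  set b := ∫ x, x ∂ν₀
  set xt := b + t • (x₁ - b)
  set V₀ := ∫ y, ‖y - b‖ ^ 2 ∂ν₀
  have hFxt : Ft t ν₀ (Measure.dirac x₁) (Measure.dirac xt) =
      ‖xt - x₁‖ ^ 2 / (2 * (t - 1)) - (V₀ + ‖xt - b‖ ^ 2) / (2 * t) := by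
    rw [Ft, W2sq_dirac_right, W2sq_comm, W2sq_dirac_right, integral_dirac,
      integral_norm_sub_sq (memLp_two_id_of_mem_P2 h₀), norm_sub_rev b]
  have hW : W2sq ρ ν₀ / (2 * t) ≤ (∫ x, ‖x - b‖ ^ 2 ∂ρ + V₀) / (2 * t) := by
    gcongr
    exact W2sq_le_integral_norm_sub_sq_add (memLp_two_id_of_mem_P2 hρ) (memLp_two_id_of_mem_P2 h₀)
  have hextrap := integral_norm_sub_sq_extrapolate (memLp_two_id_of_mem_P2 hρ) x₁ b t
  have hcompleted : (∫ x, ‖x - xt‖ ^ 2 ∂ρ) / (2 * t * (t - 1)) =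
      (∫ x, ‖x - x₁‖ ^ 2 ∂ρ - ‖xt - x₁‖ ^ 2) / (2 * (t - 1)) -
        (∫ x, ‖x - b‖ ^ 2 ∂ρ - ‖xt - b‖ ^ 2) / (2 * t) := by
    have : t - 1 ≠ 0 := by linarith
    have : t ≠ 0 := by linarith
    field_simp
    linarith
  rw [hFxt, hcompleted, Ft, W2sq_dirac_right]
  simp only [sub_div, add_div] at hW ⊢
  linarith

theorem stmt_16_general {d : ℕ} {t : ℝ} (ht : 1 < t)
    (x₁ : EucSp d) (ν₀ : Measure (EucSp d)) (h₀ : ν₀ ∈ P2 d) :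
    IsExtrapolation t ν₀ (Measure.dirac x₁)
        (Measure.dirac ((∫ x, x ∂ν₀) + t • (x₁ - ∫ x, x ∂ν₀))) ∧
      ∀ μ : Measure (EucSp d), IsExtrapolation t ν₀ (Measure.dirac x₁) μ →
        μ = Measure.dirac ((∫ x, x ∂ν₀) + t • (x₁ - ∫ x, x ∂ν₀)) := by
  set xt := (∫ x, x ∂ν₀) + t • (x₁ - ∫ x, x ∂ν₀)
  have hden : 0 < 2 * t * (t - 1) := by nlinarith
  refine ⟨⟨dirac_mem_P2 xt, fun ρ hρ => ?_⟩, fun μ ⟨hμ, hmin⟩ => ?_⟩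
  · have := Ft_dirac_add_le ht x₁ h₀ hρ
    have : 0 ≤ (∫ x, ‖x - xt‖ ^ 2 ∂ρ) / (2 * t * (t - 1)) :=
      div_nonneg (integral_nonneg fun x => by positivity) hden.le
    linarith
  · have := hμ.1
    have hle := (Ft_dirac_add_le ht x₁ h₀ hμ).trans (hmin _ (dirac_mem_P2 xt))
    have hdiv : (∫ x, ‖x - xt‖ ^ 2 ∂μ) / (2 * t * (t - 1)) ≤ 0 := by linarith
    have hzero : ∫ x, ‖x - xt‖ ^ 2 ∂μ = 0 :=
      le_antisymm (by simpa using (div_le_iff₀ hden).1 hdiv)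
        (integral_nonneg fun x => by positivity)
    exact eq_dirac_of_integral_norm_sub_sq_eq_zero
      (integrable_norm_sub_sq (memLp_two_id_of_mem_P2 hμ) xt) hzero

/-- extrapolation when `ν₁` is a Dirac mass: the unique minimizer is
the Dirac mass at `bary(ν₀) + t(x₁ - bary(ν₀))`. -/
theorem stmt_16 {d : ℕ} (hd : 1 ≤ d) {t : ℝ} (ht : 1 < t)
    (x₁ : EucSp d) (ν₀ : Measure (EucSp d)) (h₀ : ν₀ ∈ P2 d) :
    IsExtrapolation t ν₀ (Measure.dirac x₁)
        (Measure.dirac ((∫ x, x ∂ν₀) + t • (x₁ - ∫ x, x ∂ν₀))) ∧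
      ∀ μ : Measure (EucSp d), IsExtrapolation t ν₀ (Measure.dirac x₁) μ →
        μ = Measure.dirac ((∫ x, x ∂ν₀) + t • (x₁ - ∫ x, x ∂ν₀)) :=
  stmt_16_general ht x₁ ν₀ h₀
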